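/- arXiv:1911.05921 — 12 statements merged into one kernel-verified Lean document; each statement's English description precedes it below -/
import Mathlib

section
/- If put : S × V → S admits some view definition get_d satisfying both GetPut and PutGet with put, then any function get : S → V satisfying only GetPut with put (∀ s, put(s, get(s)) = s) also satisfies PutGet with put (∀ s v, get(put(s, v)) = v), and moreover get = get_d. -/
theorem getput_implies_putget {S V : Type*} (put : S × V → S) (get_d get : S → V)
    (hdgp : ∀ s, put (s, get_d s) = s) (hdpg : ∀ s v, get_d (put (s, v)) = v)
    (hgp : ∀ s, put (s, get s) = s) :
    (∀ s v, get (put (s, v)) = v) ∧ get = get_d := by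
  have heq : get = get_d := by
    funext s
    calc get s = get_d (put (s, get s)) := (hdpg s (get s)).symm
    _ = get_d s := by rw [hgp]
  subst heq
  exact ⟨hdpg, rfl⟩
end

section
/- Let R, Δ⁻, Δ⁺ ⊆ α with Δ⁻ and Δ⁺ disjoint, Δ⁻ ∩ R = ∅ and Δ⁺ ⊆ R (so (R \ Δ⁻) ∪ Δ⁺ = R). Let D⁻₋, D⁺₋ be a deletion-set and insertion-set for Δ⁻, and D⁻₊, D⁺₊ for Δ⁺, giving new deltas Δ'⁻ = (Δ⁻ \ D⁻₋) ∪ D⁺₋ and Δ'⁺ = (Δ⁺ \ D⁻₊) ∪ D⁺₊. Assume Δ'⁻ and Δ'⁺ are disjoint. Then (R \ Δ'⁻) ∪ Δ'⁺ = (R \ D⁺₋) ∪ D⁺₊, i.e., applying the updated delta to R equals applying only the newly inserted delta tuples directly to R. -/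
theorem incremental_delta_application {α : Type*}
    (R Δm Δp Dmm Dpm Dmp Dpp : Set α)
    (hdisj : Δm ∩ Δp = ∅) (hmR : Δm ∩ R = ∅) (hpR : Δp ⊆ R)
    (hDmm : Dmm ⊆ Δm) (hDmp : Dmp ⊆ Δp)
    (hdisj' : ((Δm \ Dmm) ∪ Dpm) ∩ ((Δp \ Dmp) ∪ Dpp) = ∅)
    (hdisj1 : ((Δm \ Dmm) ∪ Dpm) ∩ Dpp = ∅)
    (hdisj2 : Dpm ∩ ((Δp \ Dmp) ∪ Dpp) = ∅) :
    (R \ ((Δm \ Dmm) ∪ Dpm)) ∪ ((Δp \ Dmp) ∪ Dpp) = (R \ Dpm) ∪ Dpp := by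
  ext x
  have h2 := Set.eq_empty_iff_forall_notMem.mp hmR x
  have h8 := Set.eq_empty_iff_forall_notMem.mp hdisj2 x
  simp only [Set.mem_union, Set.mem_diff, Set.mem_inter_iff] at *
  constructor
  · rintro (⟨hR, h⟩ | (⟨hp, hnmp⟩ | hpp))
    · exact Or.inl ⟨hR, fun hd => h (Or.inr hd)⟩
    · exact Or.inl ⟨hpR hp, fun hd => h8 ⟨hd, Or.inl ⟨hp, hnmp⟩⟩⟩
    · exact Or.inr hpp
  · rintro (⟨hR, hnd⟩ | hpp)
    · exact Or.inl ⟨hR, fun h => h.elim (fun hm => h2 ⟨hm.1, hR⟩) hnd⟩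
    · exact Or.inr (Or.inr hpp)
end

section
/- Let R₁, R₂ ⊆ α (finite sets or arbitrary sets over α). Define get(R₁, R₂) = R₁ ∪ R₂ and put((R₁, R₂), V) = ((R₁ \ (R₁ \ V)) ∪ (V \ (R₁ ∪ R₂)), R₂ \ (R₂ \ V)). Then (get, put) satisfies GetPut: put((R₁, R₂), get(R₁, R₂)) = (R₁, R₂), and PutGet: get(put((R₁, R₂), V)) = V for all R₁, R₂, V. -/
theorem union_view_wellbehaved {α : Type*} :
    (∀ R₁ R₂ : Set α,
      (((R₁ \ (R₁ \ (R₁ ∪ R₂))) ∪ ((R₁ ∪ R₂) \ (R₁ ∪ R₂)), R₂ \ (R₂ \ (R₁ ∪ R₂)))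
        = (R₁, R₂))) ∧
    (∀ R₁ R₂ V : Set α,
      ((R₁ \ (R₁ \ V)) ∪ (V \ (R₁ ∪ R₂))) ∪ (R₂ \ (R₂ \ V)) = V) := by
  constructor
  · intro R₁ R₂
    ext x <;> simp
  · intro R₁ R₂ V
    ext x; simp; tauto
end

section
/- Let R ⊆ α × β be a set of pairs and p : β → Prop a predicate. Define get(R) = {(x,y) ∈ R | p y} and put(R, V) = (R \ {(x,y) ∈ R | p y ∧ (x,y) ∉ V}) ∪ {(x,y) ∈ V | (x,y) ∉ R}. Then for all R and all V with (∀ (x,y) ∈ V, p y), put(R, get(R)) = R and get(put(R, V)) = V. -/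
theorem selection_view_wellbehaved {α β : Type*} (p : β → Prop)
    (get : Set (α × β) → Set (α × β)) (put : Set (α × β) → Set (α × β) → Set (α × β))
    (hget : ∀ R, get R = {q ∈ R | p q.2})
    (hput : ∀ R V, put R V = (R \ {q ∈ R | p q.2 ∧ q ∉ V}) ∪ {q ∈ V | q ∉ R}) :
    ∀ R : Set (α × β), put R (get R) = R ∧
      ∀ V : Set (α × β), (∀ q ∈ V, p q.2) → get (put R V) = V := by
  intro R
  constructor
  · simp only [hput, hget]
    ext q
    simp only [Set.mem_union, Set.mem_diff, Set.mem_setOf_eq]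
    tauto
  · intro V hV
    simp only [hput, hget]
    ext q
    simp only [Set.mem_union, Set.mem_diff, Set.mem_setOf_eq]
    constructor
    · rintro ⟨⟨hq, hpq⟩ | ⟨hq, _⟩, hp⟩
      · by_contra h; exact hpq ⟨hq, hp, h⟩
      · exact hq
    · intro hq
      exact ⟨by tauto, hV q hq⟩
end

section
/- Let E, EE ⊆ α. Define get(E, EE) = E \ EE and put((E, EE), C) = (E ∪ (C \ E), ((EE \ (C ∩ EE)) ∪ ((E \ C) \ EE))). Then put((E,EE), get(E,EE)) = (E, EE) fails in general, but the following holds: for all E, EE with EE ⊆ E, put((E, EE), get(E, EE)) = (E, EE), and for all E, EE, C, get(put((E, EE), C)) = C. -/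
theorem ced_difference_view {α : Type*}
    (get : Set α × Set α → Set α) (put : (Set α × Set α) → Set α → Set α × Set α)
    (hget : ∀ E EE : Set α, get (E, EE) = E \ EE)
    (hput : ∀ (E EE C : Set α),
      put (E, EE) C = (E ∪ (C \ E), (EE \ (C ∩ EE)) ∪ ((E \ C) \ EE))) :
    (∀ E EE : Set α, EE ⊆ E → put (E, EE) (get (E, EE)) = (E, EE)) ∧
    (∀ E EE C : Set α, get (put (E, EE) C) = C) := by
  constructor
  · intro E EE h
    rw [hget, hput]
    ext x <;> simp
  · intro E EE C
    rw [hput, hget]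
    ext x
    simp
    tauto
end

section
/- Let put : S × V → S and suppose put satisfies the property that for all s, v₁, v₂, put(s, v₁) = put(s, v₂) → v₁ = v₂ (injectivity in the second argument), and suppose for every s there exists v with put(s, v) = s. Define get(s) to be that unique v with put(s, get(s)) = s. Then get is well-defined (the v with put(s,v)=s is unique) and (get, put) satisfies GetPut; furthermore if additionally ∀ s v, put(put(s,v), v) = put(s, v), then (get, put) satisfies PutGet. -/
theorem derive_get_from_put {S V : Type*} (put : S × V → S)
    (hinj : ∀ s v₁ v₂, put (s, v₁) = put (s, v₂) → v₁ = v₂)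
    (hex : ∀ s, ∃ v, put (s, v) = s) :
    ∃ get : S → V,
      (∀ s v, put (s, v) = s → v = get s) ∧
      (∀ s, put (s, get s) = s) ∧
      ((∀ s v, put (put (s, v), v) = put (s, v)) → ∀ s v, get (put (s, v)) = v) := by
  choose get hget using hex
  refine ⟨get, ?_, hget, ?_⟩
  · intro s v h
    exact hinj s v (get s) (by rw [h, hget])
  · intro hid s v
    exact (hinj (put (s, v)) v (get (put (s, v))) (by rw [hid, hget])).symm
end

section
/- If put : S × V → S satisfies: (a) ∀ s v, put(put(s,v), v) = put(s,v), and (b) ∀ s, v₁, v₂, put(s,v₁) = put(s,v₂) → v₁ = v₂, and (c) ∀ s, ∃ v, put(s,v) = s; then put is valid, i.e., there exists get : S → V with ∀ s, put(s, get(s)) = s and ∀ s v, get(put(s,v)) = v. -/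
theorem validity_sufficient_conditions {S V : Type*} (put : S × V → S)
    (ha : ∀ s v, put (put (s, v), v) = put (s, v))
    (hb : ∀ s v₁ v₂, put (s, v₁) = put (s, v₂) → v₁ = v₂)
    (hc : ∀ s, ∃ v, put (s, v) = s) :
    ∃ get : S → V, (∀ s, put (s, get s) = s) ∧ (∀ s v, get (put (s, v)) = v) := by
  refine ⟨fun s => (hc s).choose, fun s => (hc s).choose_spec, fun s v => ?_⟩
  apply hb (put (s, v))
  rw [(hc (put (s, v))).choose_spec, ha]
end

section
/- Let R ⊆ α × β. Define get(R) = {x | ∃ y, (x,y) ∈ R} (projection) and for a default value b₀ : β, put(R, V) = (R \ {(x,y) ∈ R | x ∉ V}) ∪ {(x, b₀) | x ∈ V ∧ ¬∃ y, (x,y) ∈ R}. Then (get, put) satisfies GetPut and PutGet. -/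
theorem projection_view_wellbehaved {α β : Type*} (b₀ : β)
    (get : Set (α × β) → Set α) (put : Set (α × β) → Set α → Set (α × β))
    (hget : ∀ R, get R = {x | ∃ y, (x, y) ∈ R})
    (hput : ∀ R V, put R V =
      (R \ {q ∈ R | q.1 ∉ V}) ∪ ((fun x => (x, b₀)) '' {x ∈ V | ¬ ∃ y, (x, y) ∈ R})) :
    (∀ R, put R (get R) = R) ∧ (∀ R V, get (put R V) = V) := by
  constructor
  · intro R
    rw [hput, hget]
    ext ⟨x, y⟩
    simp only [Set.mem_union, Set.mem_diff, Set.mem_setOf_eq, Set.mem_image, not_not]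
    constructor
    · rintro (⟨h, _⟩ | ⟨a, ⟨⟨b, hb⟩, hna⟩, heq⟩)
      · exact h
      · exact absurd ⟨b, hb⟩ hna
    · intro h
      exact Or.inl ⟨h, fun h' => h'.2 ⟨y, h⟩⟩
  · intro R V
    rw [hget, hput]
    ext x
    simp only [Set.mem_setOf_eq, Set.mem_union, Set.mem_diff, Set.mem_image, not_not]
    constructor
    · rintro ⟨y, ⟨h, hv⟩ | ⟨a, ⟨ha, _⟩, heq⟩⟩
      · by_contra hx
        exact hv ⟨h, hx⟩
      · cases heq; exact ha
    · intro hx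
      by_cases hR : ∃ y, (x, y) ∈ R
      · obtain ⟨y, hy⟩ := hR
        exact ⟨y, Or.inl ⟨hy, fun h => h.2 hx⟩⟩
      · exact ⟨b₀, Or.inr ⟨x, ⟨hx, hR⟩, rfl⟩⟩
end

section
/- Union incrementalization rule: let R₁, R₂ ⊆ α and H = R₁ ∪ R₂. Given deltas (D₁⁻, D₁⁺) on R₁ and (D₂⁻, D₂⁺) on R₂ with new relations R₁ν = (R₁ \ D₁⁻) ∪ D₁⁺ and R₂ν = (R₂ \ D₂⁻) ∪ D₂⁺, define ΔH⁻ = (D₁⁻ \ R₂ν) ∪ (D₂⁻ \ R₁ν) and ΔH⁺ = D₁⁺ ∪ D₂⁺. Assume D₁⁻ ∩ D₁⁺ = ∅ and D₂⁻ ∩ D₂⁺ = ∅ and D₁⁻ ⊆ R₁, D₂⁻ ⊆ R₂. Then (H \ ΔH⁻) ∪ ΔH⁺ = R₁ν ∪ R₂ν. -/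
set_option maxHeartbeats 2000000

theorem union_incrementalization {α : Type*} (R₁ R₂ D₁m D₁p D₂m D₂p : Set α)
    (h₁ : D₁m ∩ D₁p = ∅) (h₂ : D₂m ∩ D₂p = ∅)
    (h₁R : D₁m ⊆ R₁) (h₂R : D₂m ⊆ R₂) :
    ((R₁ ∪ R₂) \ ((D₁m \ ((R₂ \ D₂m) ∪ D₂p)) ∪ (D₂m \ ((R₁ \ D₁m) ∪ D₁p))))
      ∪ (D₁p ∪ D₂p)
      = ((R₁ \ D₁m) ∪ D₁p) ∪ ((R₂ \ D₂m) ∪ D₂p) := by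
  ext x
  have e1 := Set.eq_empty_iff_forall_notMem.mp h₁ x
  have e2 := Set.eq_empty_iff_forall_notMem.mp h₂ x
  have := @h₁R x; have := @h₂R x
  simp only [Set.mem_union, Set.mem_diff, Set.mem_inter_iff] at *
  tauto
end

section
/- Negation (set-difference) incrementalization rule: let R₁, R₂ ⊆ α, H = R₁ \ R₂, with deltas as before giving R₁ν = (R₁ \ D₁⁻) ∪ D₁⁺, R₂ν = (R₂ \ D₂⁻) ∪ D₂⁺. Define ΔH⁻ = (D₁⁻ \ R₂) ∪ (R₁ ∩ D₂⁺) and ΔH⁺ = (D₁⁺ \ R₂ν) ∪ (R₁ν ∩ D₂⁻). Assume D₁⁻ ∩ D₁⁺ = ∅, D₂⁻ ∩ D₂⁺ = ∅, D₁⁻ ⊆ R₁, D₁⁺ ∩ R₁ = ∅, D₂⁻ ⊆ R₂, D₂⁺ ∩ R₂ = ∅. Then (H \ ΔH⁻) ∪ ΔH⁺ = R₁ν \ R₂ν. -/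
set_option maxHeartbeats 1000000 in
theorem negation_incrementalization {α : Type*} (R₁ R₂ D₁m D₁p D₂m D₂p : Set α)
    (h₁ : D₁m ∩ D₁p = ∅) (h₂ : D₂m ∩ D₂p = ∅)
    (h₁m : D₁m ⊆ R₁) (h₁p : D₁p ∩ R₁ = ∅)
    (h₂m : D₂m ⊆ R₂) (h₂p : D₂p ∩ R₂ = ∅) :
    ((R₁ \ R₂) \ ((D₁m \ R₂) ∪ (R₁ ∩ D₂p)))
      ∪ ((D₁p \ ((R₂ \ D₂m) ∪ D₂p)) ∪ (((R₁ \ D₁m) ∪ D₁p) ∩ D₂m))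
      = ((R₁ \ D₁m) ∪ D₁p) \ ((R₂ \ D₂m) ∪ D₂p) := by
  ext x
  have e1 := Set.eq_empty_iff_forall_notMem.mp h₁ x
  have e2 := Set.eq_empty_iff_forall_notMem.mp h₂ x
  have e3 := Set.eq_empty_iff_forall_notMem.mp h₁p x
  have e4 := Set.eq_empty_iff_forall_notMem.mp h₂p x
  have m1 := @h₁m x
  have m2 := @h₂m x
  simp only [Set.mem_union, Set.mem_diff, Set.mem_inter_iff] at *
  tauto
end

section
/- Join incrementalization rule (as intersection): let R₁, R₂ ⊆ α, H = R₁ ∩ R₂, R₁ν = (R₁ \ D₁⁻) ∪ D₁⁺, R₂ν = (R₂ \ D₂⁻) ∪ D₂⁺. Define ΔH⁻ = (D₁⁻ ∩ R₂) ∪ (R₁ ∩ D₂⁻) and ΔH⁺ = (D₁⁺ ∩ R₂ν) ∪ (R₁ν ∩ D₂⁺). Assume D₁⁻ ∩ D₁⁺ = ∅, D₂⁻ ∩ D₂⁺ = ∅, D₁⁻ ⊆ R₁, D₁⁺ ∩ R₁ = ∅, D₂⁻ ⊆ R₂, D₂⁺ ∩ R₂ = ∅. Then (H \ ΔH⁻)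 ∪ ΔH⁺ = R₁ν ∩ R₂ν. -/
theorem join_incrementalization {α : Type*} (R₁ R₂ D₁m D₁p D₂m D₂p : Set α)
    (h₁ : D₁m ∩ D₁p = ∅) (h₂ : D₂m ∩ D₂p = ∅)
    (h₁m : D₁m ⊆ R₁) (h₁p : D₁p ∩ R₁ = ∅)
    (h₂m : D₂m ⊆ R₂) (h₂p : D₂p ∩ R₂ = ∅) :
    ((R₁ ∩ R₂) \ ((D₁m ∩ R₂) ∪ (R₁ ∩ D₂m)))
      ∪ ((D₁p ∩ ((R₂ \ D₂m) ∪ D₂p)) ∪ (((R₁ \ D₁m) ∪ D₁p) ∩ D₂p))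
      = ((R₁ \ D₁m) ∪ D₁p) ∩ ((R₂ \ D₂m) ∪ D₂p) := by
  ext x
  have e1 := Set.eq_empty_iff_forall_notMem.mp h₁ x
  have e2 := Set.eq_empty_iff_forall_notMem.mp h₂ x
  have e3 := Set.eq_empty_iff_forall_notMem.mp h₁p x
  have e4 := Set.eq_empty_iff_forall_notMem.mp h₂p x
  have s1 := @h₁m x
  have s2 := @h₂m x
  simp only [Set.mem_union, Set.mem_inter_iff, Set.mem_diff] at *
  itauto
end

section
/- Sequential delta merging: process a list of update operations on a set V, where each operation is either insert(t) or delete(t), maintaining Δ⁺ and Δ⁻ by: on insert set δ⁺={t}, δ⁻=∅; on delete set δ⁺=∅, δ⁻={t}; and update Δ⁺ ← (Δ⁺ \ δ⁻) ∪ δ⁺, Δ⁻ ← (Δ⁻ \ δ⁺) ∪ δ⁻, starting from Δ⁺ = Δ⁻ = ∅. Then after processing the whole list, (V \ Δ⁻) ∪ Δ⁺ equals the result of applying the operations to V one at a time (insert(t): V ∪ {t}; delete(t): V \ {t}), and moreover Δ⁺ ∩ Δ⁻ = ∅ throughout. -/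
/-- Apply a single update operation (`Sum.inl t` = insert `t`, `Sum.inr t` = delete `t`). -/
def applyOp {α : Type*} (V : Set α) (op : α ⊕ α) : Set α :=
  match op with
  | Sum.inl t => V ∪ {t}
  | Sum.inr t => V \ {t}

/-- Merge one operation into the accumulated delta `(Δ⁺, Δ⁻)`:
on insert, δ⁺ = {t}, δ⁻ = ∅; on delete, δ⁺ = ∅, δ⁻ = {t};
then Δ⁺ ← (Δ⁺ \ δ⁻) ∪ δ⁺ and Δ⁻ ← (Δ⁻ \ δ⁺) ∪ δ⁻. -/
def deltaStep {α : Type*} (d : Set α × Set α) (op : α ⊕ α) : Set α × Set α :=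
  match op with
  | Sum.inl t => ((d.1 \ (∅ : Set α)) ∪ {t}, (d.2 \ {t}) ∪ (∅ : Set α))
  | Sum.inr t => ((d.1 \ {t}) ∪ (∅ : Set α), (d.2 \ (∅ : Set α)) ∪ {t})

theorem view_delta_merging {α : Type*} (ops : List (α ⊕ α)) (V : Set α) :
    ((V \ (ops.foldl deltaStep ((∅ : Set α), (∅ : Set α))).2)
        ∪ (ops.foldl deltaStep ((∅ : Set α), (∅ : Set α))).1
      = ops.foldl applyOp V) ∧
    (∀ l₁ l₂ : List (α ⊕ α), ops = l₁ ++ l₂ →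
      (l₁.foldl deltaStep ((∅ : Set α), (∅ : Set α))).1 ∩
        (l₁.foldl deltaStep ((∅ : Set α), (∅ : Set α))).2 = ∅) := by
  have key : ∀ (l : List (α ⊕ α)) (d : Set α × Set α) (W : Set α),
      (W \ (l.foldl deltaStep d).2) ∪ (l.foldl deltaStep d).1
        = l.foldl applyOp ((W \ d.2) ∪ d.1) := by
    intro l
    induction l with
    | nil => intro d W; rfl
    | cons op tl ih =>
      intro d W
      simp only [List.foldl_cons]
      rw [ih]
      congr 1
      cases op with
      | inl t =>
        simp only [deltaStep, applyOp]
        ext x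
        by_cases hx : x = t <;> simp [hx]
      | inr t =>
        simp only [deltaStep, applyOp]
        ext x
        by_cases hx : x = t <;> simp [hx]
  have disj : ∀ (l : List (α ⊕ α)) (d : Set α × Set α),
      d.1 ∩ d.2 = ∅ → (l.foldl deltaStep d).1 ∩ (l.foldl deltaStep d).2 = ∅ := by
    intro l
    induction l with
    | nil => intro d h; exact h
    | cons op tl ih =>
      intro d h
      simp only [List.foldl_cons]
      apply ih
      have h' := Set.eq_empty_iff_forall_notMem.mp h
      cases op with
      | inl t =>
        simp only [deltaStep, Set.diff_empty, Set.union_empty]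
        ext x
        have hx := h' x
        simp only [Set.mem_inter_iff] at hx
        simp only [Set.mem_inter_iff, Set.mem_union, Set.mem_diff, Set.mem_singleton_iff,
          Set.mem_empty_iff_false, iff_false]
        tauto
      | inr t =>
        simp only [deltaStep, Set.diff_empty, Set.union_empty]
        ext x
        have hx := h' x
        simp only [Set.mem_inter_iff] at hx
        simp only [Set.mem_inter_iff, Set.mem_union, Set.mem_diff, Set.mem_singleton_iff,
          Set.mem_empty_iff_false, iff_false]
        tauto
  constructor
  · simpa using key ops (∅, ∅) V
  · intro l₁ l₂ _
    exact disj l₁ (∅, ∅) (by simp)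
end
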